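/- arXiv:2601.21140 — 2 statements merged into one kernel-verified Lean document; each statement's English description precedes it below -/
import Mathlib

section
/- Abstract polymer model representation of the partition function (Lemma 1): Let G=(V,E) be a finite multihypergraph, β>0, λ∈ℂ, and let Φ, Ψ, H_Φ, H_Ψ and the normalised trace Tr be as in the context. For each polymer γ (a connected subset of edges of E with vertex support V(γ)), define the weight w_γ := ∑_{T⊆E(γ)} (−1)^{|E(γ)∖T|} Tr[e^{−β(∑_{v∈V(γ)}Φ_v + λ∑_{e∈T}Ψ_e)}] / Z_γ(β,0), where Z_γ(β,0) := Tr[e^{−β∑_{v∈V(γ)}Φ_v}]. Then Z_G(β,λ) = Z_G(β,0) · ∑_{S⊆E} ∏_{γ ∈ components(S)} w_γ, where components(S) denotes the set of connected components of S, equivalently Z_G(β,λ) = Z_G(β,0) ∑_{Γ} ∏_{γ∈Γ} w_γ where the sum is over all sets Γ of pairwise vertex-disjoint connected edge subsets (admissible sets of polymers). -/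
open scoped BigOperators

/-- The embedding of a single-site operator at vertex `v` into the full Hilbert space
(represented as matrices indexed by classical spin configurations `V → Fin d`). -/
noncomputable def onSite {V : Type*} [Fintype V] [DecidableEq V] (d : ℕ) (v : V)
    (A : Matrix (Fin d) (Fin d) ℂ) : Matrix (V → Fin d) (V → Fin d) ℂ :=
  fun x y => if ∀ w, w ≠ v → x w = y w then A (x v) (y v) else 0

/-- An operator on the total space is supported on a set `S` of vertices if it is the
embedding of an operator acting on the tensor factors at the vertices of `S`. -/
def SupportedOn {V : Type*} [Fintype V] [DecidableEq V] (d : ℕ) (S : Finset V)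
    (A : Matrix (V → Fin d) (V → Fin d) ℂ) : Prop :=
  ∃ B : ({v // v ∈ S} → Fin d) → ({v // v ∈ S} → Fin d) → ℂ, ∀ x y,
    A x y = if ∀ v ∉ S, x v = y v then B (fun v => x v.1) (fun v => y v.1) else 0

/-- The trace normalised so that the identity has trace 1. -/
noncomputable def ntr {n : Type*} [Fintype n] (A : Matrix n n ℂ) : ℂ :=
  Matrix.trace A / (Fintype.card n : ℂ)

/-- A set `S` of (labels of) edges is connected if any two of its edges are joined by a
path of edges of `S` in which consecutive edges share a vertex. -/
def Connects {V ι : Type*} [DecidableEq V] (vert : ι → Finset V) (S : Finset ι) : Prop :=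
  ∀ e ∈ S, ∀ f ∈ S,
    Relation.ReflTransGen (fun a b => a ∈ S ∧ b ∈ S ∧ (vert a ∩ vert b).Nonempty) e f

open Classical in
/-- The connected components of a set `S` of (labels of) edges: the maximal connected
subsets of `S`. -/
noncomputable def components {V ι : Type*} [DecidableEq V] [DecidableEq ι]
    (vert : ι → Finset V) (S : Finset ι) : Finset (Finset ι) :=
  S.image (fun e => S.filter (fun f =>
    Relation.ReflTransGen (fun a b => a ∈ S ∧ b ∈ S ∧ (vert a ∩ vert b).Nonempty) e f))

/-- The weight of a polymer `γ` (a connected set of edges):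
`w_γ = ∑_{T⊆E(γ)} (-1)^{|E(γ)\T|} Tr[exp(-β(∑_{v∈V(γ)} Φ_v + λ ∑_{e∈T} Ψ_e))] / Z_γ(β,0)`. -/
noncomputable def polymerWeight {V ι : Type*} [Fintype V] [DecidableEq V] [DecidableEq ι]
    (d : ℕ) (vert : ι → Finset V) (Φ : V → Matrix (Fin d) (Fin d) ℂ)
    (Ψ : ι → Matrix (V → Fin d) (V → Fin d) ℂ) (β : ℝ) (lam : ℂ) (γ : Finset ι) : ℂ :=
  ∑ T ∈ γ.powerset, (-1 : ℂ) ^ ((γ \ T).card) *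
    (ntr (NormedSpace.exp ((-(β : ℂ)) •
        ((∑ v ∈ γ.biUnion vert, onSite d v (Φ v)) + lam • ∑ e ∈ T, Ψ e))) /
      ntr (NormedSpace.exp ((-(β : ℂ)) • ∑ v ∈ γ.biUnion vert, onSite d v (Φ v))))


set_option linter.unusedSectionVars false
set_option maxHeartbeats 1000000

namespace Polymer

variable {V : Type*} [Fintype V] [DecidableEq V] {d : ℕ}

def res (S : Finset V) (x : V → Fin d) : ({v // v ∈ S} → Fin d) := fun v => x v.1

noncomputable def embed (S : Finset V)
    (B : Matrix ({v // v ∈ S} → Fin d) ({v // v ∈ S} → Fin d) ℂ) :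
    Matrix (V → Fin d) (V → Fin d) ℂ :=
  fun x y => if ∀ v ∉ S, x v = y v then B (res S x) (res S y) else 0

lemma supportedOn_iff {S : Finset V} {A : Matrix (V → Fin d) (V → Fin d) ℂ} :
    SupportedOn d S A ↔ ∃ B, A = embed S B := by
  constructor
  · rintro ⟨B, hB⟩
    exact ⟨B, by funext x y; exact hB x y⟩
  · rintro ⟨B, rfl⟩
    exact ⟨B, fun x y => rfl⟩

def ext (S : Finset V) (x : V → Fin d) (a : {v // v ∈ S} → Fin d) : V → Fin d :=
  fun v => if h : v ∈ S then a ⟨v, h⟩ else x v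

@[simp] lemma res_ext (S : Finset V) (x : V → Fin d) (a : {v // v ∈ S} → Fin d) :
    res S (ext S x a) = a := by
  funext v
  simp [res, ext, v.2]

lemma ext_eq_self {S : Finset V} {x z : V → Fin d} (h : ∀ v ∉ S, x v = z v) :
    ext S x (res S z) = z := by
  funext v
  by_cases hv : v ∈ S
  · simp [ext, hv, res]
  · simp [ext, hv, h v hv]

lemma ext_agree (S : Finset V) (x : V → Fin d) (a : {v // v ∈ S} → Fin d)
    {v : V} (hv : v ∉ S) : ext S x a v = x v := by simp [ext, hv]

lemma ext_injective (S : Finset V) (x : V → Fin d) :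
    Function.Injective (ext S x) := by
  intro a b h
  funext v
  have := congrFun h v.1
  simpa [ext, v.2] using this

lemma sum_ext (S : Finset V) (x : V → Fin d) (F : (V → Fin d) → ℂ)
    (hF : ∀ z, ¬ (∀ v ∉ S, x v = z v) → F z = 0) :
    ∑ z, F z = ∑ a, F (ext S x a) := by
  classical
  have h1 : ∑ z, F z = ∑ z ∈ Finset.univ.filter (fun z => ∀ v ∉ S, x v = z v), F z :=
    (Finset.sum_filter_of_ne (fun z _ hz => by
      by_contra hc; exact hz (hF z hc))).symm
  have h2 : Finset.univ.filter (fun z => ∀ v ∉ S, x v = z v)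
      = Finset.image (ext S x) Finset.univ := by
    ext z
    simp only [Finset.mem_filter, Finset.mem_univ, true_and, Finset.mem_image]
    constructor
    · intro hz
      exact ⟨res S z, ext_eq_self hz⟩
    · rintro ⟨a, rfl⟩
      exact fun v hv => (ext_agree S x a hv).symm
  rw [h1, h2, Finset.sum_image (fun a _ b _ h => ext_injective S x h)]

end Polymer

namespace Polymer

variable {V : Type*} [Fintype V] [DecidableEq V] {d : ℕ}

lemma embed_add (S : Finset V) (B C) :
    embed (d := d) S B + embed S C = embed S (B + C) := by
  funext x y
  simp only [Matrix.add_apply, embed, Pi.add_apply]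
  split <;> simp

lemma embed_smul (S : Finset V) (c : ℂ) (B) :
    c • embed (d := d) S B = embed S (c • B) := by
  funext x y
  simp only [Matrix.smul_apply, embed, Pi.smul_apply, smul_eq_mul]
  split <;> simp

lemma embed_zero (S : Finset V) : embed (d := d) S 0 = 0 := by
  funext x y
  simp only [embed, Pi.zero_apply, Matrix.zero_apply]
  split <;> rfl

lemma embed_one (S : Finset V) : embed (d := d) S (1 : Matrix _ _ ℂ) = 1 := by
  funext x y
  simp only [embed, Matrix.one_apply]
  by_cases h : ∀ v ∉ S, x v = y v
  · rw [if_pos h]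
    by_cases hxy : x = y
    · subst hxy; simp
    · rw [if_neg hxy, if_neg]
      intro hres
      apply hxy
      funext v
      by_cases hv : v ∈ S
      · exact congrFun hres ⟨v, hv⟩
      · exact h v hv
  · rw [if_neg h, if_neg]
    intro hxy
    exact h (fun v _ => congrFun hxy v)

lemma embed_mul (S : Finset V) (B C : Matrix ({v // v ∈ S} → Fin d) ({v // v ∈ S} → Fin d) ℂ) :
    embed S B * embed S C = embed S (B * C) := by
  funext x y
  rw [Matrix.mul_apply]
  have hz : ∀ z, ¬ (∀ v ∉ S, x v = z v) → embed S B x z * embed S C z y = 0 := by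
    intro z hz
    rw [embed, if_neg hz, zero_mul]
  rw [sum_ext S x _ hz]
  by_cases h : ∀ v ∉ S, x v = y v
  · rw [embed, if_pos h, Matrix.mul_apply]
    apply Finset.sum_congr rfl
    intro a _
    rw [embed, if_pos (fun v hv => (ext_agree S x a hv).symm), embed,
      if_pos (fun v hv => by rw [ext_agree S x a hv]; exact h v hv)]
    rw [res_ext]
  · rw [embed, if_neg h]
    apply Finset.sum_eq_zero
    intro a _
    have h0 : embed S C (ext S x a) y = 0 := by
      simp only [embed]
      apply if_neg
      intro hc
      exact h (fun v hv => (ext_agree S x a hv).symm.trans (hc v hv))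
    rw [h0, mul_zero]


@[simp] lemma embed_apply_ext (S : Finset V) (B) (x : V → Fin d) (a) :
    embed S B x (ext S x a) = B (res S x) a := by
  simp only [embed]
  rw [if_pos (fun v hv => (ext_agree S x a hv).symm), res_ext]

lemma res_ext_of_disjoint {S T : Finset V} (hST : Disjoint S T) (x : V → Fin d) (a) :
    res T (ext S x a) = res T x := by
  funext v
  have hvS : v.1 ∉ S := fun hS => Finset.disjoint_left.mp hST hS v.2
  simp only [res]
  exact ext_agree S x a hvS

lemma embed_mul_disjoint {S T : Finset V} (hST : Disjoint S T) (B C) :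
    embed (d := d) S B * embed T C =
      fun x y => if ∀ v, v ∉ S → v ∉ T → x v = y v
        then B (res S x) (res S y) * C (res T x) (res T y) else 0 := by
  funext x y
  rw [Matrix.mul_apply]
  have hz : ∀ z, ¬ (∀ v ∉ S, x v = z v) → embed S B x z * embed T C z y = 0 := by
    intro z hz
    simp only [embed]
    rw [if_neg hz, zero_mul]
  rw [sum_ext S x _ hz]
  have key : ∀ a, embed S B x (ext S x a) * embed T C (ext S x a) y
      = (if a = res S y then
          (if ∀ v, v ∉ S → v ∉ T → x v = y v
            then B (res S x) (res S y) * C (res T x) (res T y) else 0) else 0) := by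
    intro a
    rw [embed_apply_ext]
    by_cases h2 : ∀ v ∉ T, ext S x a v = y v
    · have ha : a = res S y := by
        funext v
        have hvT : v.1 ∉ T := fun hT => Finset.disjoint_left.mp hST v.2 hT
        have := h2 v.1 hvT
        rw [ext, dif_pos v.2] at this
        exact this
      have hQ : ∀ v, v ∉ S → v ∉ T → x v = y v := by
        intro v hvS hvT
        rw [← h2 v hvT, ext_agree S x a hvS]
      simp only [embed]
      rw [if_pos h2, res_ext_of_disjoint hST, if_pos ha, if_pos hQ, ha]
    · have : embed T C (ext S x a) y = 0 := by
        simp only [embed]; exact if_neg h2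
      rw [this, mul_zero]
      by_cases ha : a = res S y
      · rw [if_pos ha]
        rw [if_neg]
        intro hQ
        apply h2
        intro v hvT
        by_cases hvS : v ∈ S
        · rw [ext, dif_pos hvS, ha]; rfl
        · rw [ext_agree S x a hvS]; exact hQ v hvS hvT
      · rw [if_neg ha]
  rw [Finset.sum_congr rfl (fun a _ => key a), Finset.sum_ite_eq' Finset.univ (res S y)]
  simp

lemma commute_embed_disjoint {S T : Finset V} (hST : Disjoint S T) (B C) :
    Commute (embed (d := d) S B) (embed T C) := by
  unfold Commute SemiconjBy
  rw [embed_mul_disjoint hST, embed_mul_disjoint hST.symm]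
  funext x y
  by_cases h : ∀ v, v ∉ S → v ∉ T → x v = y v
  · rw [if_pos h, if_pos (fun v hv hv' => h v hv' hv), mul_comm]
  · rw [if_neg h, if_neg (fun hc => h (fun v hv hv' => hc v hv' hv))]


@[simp] lemma embed_apply_diag (S : Finset V) (B) (x : V → Fin d) :
    embed S B x x = B (res S x) (res S x) := if_pos (fun _ _ => rfl)

lemma res_equiv_fst (S : Finset V) (x : V → Fin d) :
    res S x = (Equiv.piEquivPiSubtypeProd (fun v => v ∈ S) (fun _ => Fin d) x).1 := rfl

lemma sum_res (S : Finset V) (f : ({v // v ∈ S} → Fin d) → ℂ) :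
    ∑ x : V → Fin d, f (res S x)
      = (Fintype.card ({v // v ∉ S} → Fin d) : ℂ) * ∑ a, f a := by
  classical
  rw [← Equiv.sum_comp (Equiv.piEquivPiSubtypeProd (fun v => v ∈ S) (fun _ => Fin d)).symm
    (fun x => f (res S x)), Fintype.sum_prod_type]
  have : ∀ (a : {v // v ∈ S} → Fin d) (b : {v // ¬ v ∈ S} → Fin d),
      res S ((Equiv.piEquivPiSubtypeProd (fun v => v ∈ S) (fun _ => Fin d)).symm (a, b)) = a := by
    intro a b
    funext v
    simp [res, Equiv.piEquivPiSubtypeProd, v.2]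
  simp_rw [this]
  rw [Finset.mul_sum]
  apply Finset.sum_congr rfl
  intro a _
  rw [Finset.sum_const, Finset.card_univ, nsmul_eq_mul]

lemma sum_res_mul {S T : Finset V} (hST : Disjoint S T)
    (f : ({v // v ∈ S} → Fin d) → ℂ) (g : ({v // v ∈ T} → Fin d) → ℂ) :
    (∑ x : V → Fin d, f (res S x) * g (res T x)) * (Fintype.card (V → Fin d) : ℂ)
      = (∑ x : V → Fin d, f (res S x)) * (∑ x : V → Fin d, g (res T x)) := by
  classical
  set e := Equiv.piEquivPiSubtypeProd (fun v => v ∈ S) (fun _ => Fin d) with he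
  have hmemT : ∀ v : {v // v ∈ T}, ¬ v.1 ∈ S :=
    fun v hS => Finset.disjoint_left.mp hST hS v.2
  set g' : ({v // ¬ v ∈ S} → Fin d) → ℂ := fun b => g (fun v => b ⟨v.1, hmemT v⟩) with hg'
  have hres : ∀ (a : {v // v ∈ S} → Fin d) (b : {v // ¬ v ∈ S} → Fin d),
      res S (e.symm (a, b)) = a := by
    intro a b; funext v; simp [res, he, Equiv.piEquivPiSubtypeProd, v.2]
  have hresT : ∀ (a : {v // v ∈ S} → Fin d) (b : {v // ¬ v ∈ S} → Fin d),
      g (res T (e.symm (a, b))) = g' b := by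
    intro a b
    congr 1
    funext v
    simp [res, he, Equiv.piEquivPiSubtypeProd, hmemT v]
  have h1 : (∑ x : V → Fin d, f (res S x) * g (res T x))
      = (∑ a, f a) * (∑ b, g' b) := by
    rw [← Equiv.sum_comp e.symm (fun x => f (res S x) * g (res T x)),
      Fintype.sum_prod_type, Finset.sum_mul_sum]
    exact Finset.sum_congr rfl fun a _ => Finset.sum_congr rfl fun b _ => by
      rw [hres, hresT]
  have h2 : (∑ x : V → Fin d, f (res S x))
      = (Fintype.card ({v // ¬ v ∈ S} → Fin d) : ℂ) * ∑ a, f a := sum_res S f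
  have h3 : (∑ x : V → Fin d, g (res T x))
      = (Fintype.card ({v // v ∈ S} → Fin d) : ℂ) * ∑ b, g' b := by
    rw [← Equiv.sum_comp e.symm (fun x => g (res T x)), Fintype.sum_prod_type]
    simp_rw [hresT]
    rw [Finset.sum_const, Finset.card_univ, nsmul_eq_mul, Finset.mul_sum]
  have h4 : (Fintype.card (V → Fin d) : ℂ)
      = (Fintype.card ({v // v ∈ S} → Fin d) : ℂ) *
        (Fintype.card ({v // ¬ v ∈ S} → Fin d) : ℂ) := by
    rw [← Nat.cast_mul]
    congr 1
    rw [← Fintype.card_prod]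
    exact Fintype.card_congr e
  rw [h1, h2, h3, h4]
  ring

lemma card_fun_ne_zero (hd : 0 < d) : (Fintype.card (V → Fin d) : ℂ) ≠ 0 := by
  have : Nonempty (V → Fin d) := ⟨fun _ => ⟨0, hd⟩⟩
  exact_mod_cast Fintype.card_ne_zero

lemma ntr_embed_mul_disjoint (hd : 0 < d) {S T : Finset V} (hST : Disjoint S T) (B C) :
    ntr (embed (d := d) S B * embed T C) = ntr (embed S B) * ntr (embed T C) := by
  have hdiag : (embed (d := d) S B * embed T C).diag
      = fun x => B (res S x) (res S x) * C (res T x) (res T x) := by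
    funext x
    rw [Matrix.diag_apply, embed_mul_disjoint hST]
    exact if_pos (fun _ _ _ => rfl)
  have htr : Matrix.trace (embed (d := d) S B * embed T C)
      = ∑ x : V → Fin d, B (res S x) (res S x) * C (res T x) (res T x) := by
    rw [Matrix.trace, hdiag]
  have htrS : Matrix.trace (embed (d := d) S B) = ∑ x : V → Fin d, B (res S x) (res S x) := by
    rw [Matrix.trace]
    exact Finset.sum_congr rfl fun x _ => embed_apply_diag S B x
  have htrT : Matrix.trace (embed (d := d) T C) = ∑ x : V → Fin d, C (res T x) (res T x) := by
    rw [Matrix.trace]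
    exact Finset.sum_congr rfl fun x _ => embed_apply_diag T C x
  have key := sum_res_mul hST (fun a => B a a) (fun b => C b b)
  have hN := card_fun_ne_zero (V := V) hd
  rw [ntr, ntr, ntr, htr, htrS, htrT, div_mul_div_comm, ← key]
  rw [mul_div_mul_right _ _ hN]


noncomputable def embedAlg (S : Finset V) (d : ℕ) :
    Matrix ({v // v ∈ S} → Fin d) ({v // v ∈ S} → Fin d) ℂ
      →ₐ[ℂ] Matrix (V → Fin d) (V → Fin d) ℂ where
  toFun := embed S
  map_one' := embed_one S
  map_mul' := fun B C => (embed_mul S B C).symm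
  map_zero' := embed_zero S
  map_add' := fun B C => (embed_add S B C).symm
  commutes' := fun c => by
    rw [Algebra.algebraMap_eq_smul_one, Algebra.algebraMap_eq_smul_one, ← embed_one S,
      embed_smul]

lemma embed_exp (S : Finset V)
    (B : Matrix ({v // v ∈ S} → Fin d) ({v // v ∈ S} → Fin d) ℂ) :
    NormedSpace.exp (embed (d := d) S B) = embed S (NormedSpace.exp B) := by
  letI : SeminormedRing (Matrix ({v // v ∈ S} → Fin d) ({v // v ∈ S} → Fin d) ℂ) :=
    Matrix.linftyOpSemiNormedRing
  letI : NormedRing (Matrix ({v // v ∈ S} → Fin d) ({v // v ∈ S} → Fin d) ℂ) :=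
    Matrix.linftyOpNormedRing
  letI : NormedAlgebra ℂ (Matrix ({v // v ∈ S} → Fin d) ({v // v ∈ S} → Fin d) ℂ) :=
    Matrix.linftyOpNormedAlgebra
  letI : NormedAlgebra ℚ (Matrix ({v // v ∈ S} → Fin d) ({v // v ∈ S} → Fin d) ℂ) :=
    .restrictScalars ℚ ℂ _
  letI : SeminormedRing (Matrix (V → Fin d) (V → Fin d) ℂ) :=
    Matrix.linftyOpSemiNormedRing
  letI : NormedRing (Matrix (V → Fin d) (V → Fin d) ℂ) :=
    Matrix.linftyOpNormedRing
  letI : NormedAlgebra ℂ (Matrix (V → Fin d) (V → Fin d) ℂ) :=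
    Matrix.linftyOpNormedAlgebra
  have hcont : Continuous (embedAlg (V := V) S d) :=
    LinearMap.continuous_of_finiteDimensional (embedAlg (V := V) S d).toLinearMap
  have h := (NormedSpace.map_exp (embedAlg (V := V) S d) hcont B).symm
  exact h

lemma supportedOn_exp {S : Finset V} {A : Matrix (V → Fin d) (V → Fin d) ℂ}
    (h : SupportedOn d S A) : SupportedOn d S (NormedSpace.exp A) := by
  rw [supportedOn_iff] at h ⊢
  obtain ⟨B, rfl⟩ := h
  exact ⟨NormedSpace.exp (B : Matrix _ _ ℂ), embed_exp S B⟩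

lemma supportedOn_add {S : Finset V} {A A' : Matrix (V → Fin d) (V → Fin d) ℂ}
    (h : SupportedOn d S A) (h' : SupportedOn d S A') : SupportedOn d S (A + A') := by
  rw [supportedOn_iff] at h h' ⊢
  obtain ⟨B, rfl⟩ := h
  obtain ⟨B', rfl⟩ := h'
  exact ⟨B + B', (embed_add S B B')⟩

lemma supportedOn_smul {S : Finset V} {A : Matrix (V → Fin d) (V → Fin d) ℂ}
    (c : ℂ) (h : SupportedOn d S A) : SupportedOn d S (c • A) := by
  rw [supportedOn_iff] at h ⊢
  obtain ⟨B, rfl⟩ := h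
  exact ⟨c • B, (embed_smul S c B)⟩

lemma supportedOn_zero (S : Finset V) : SupportedOn d S (0 : Matrix (V → Fin d) (V → Fin d) ℂ) :=
  supportedOn_iff.mpr ⟨0, (embed_zero S).symm⟩

lemma supportedOn_sum {S : Finset V} {κ : Type*} (t : Finset κ)
    (f : κ → Matrix (V → Fin d) (V → Fin d) ℂ) (h : ∀ k ∈ t, SupportedOn d S (f k)) :
    SupportedOn d S (∑ k ∈ t, f k) := by
  classical
  induction t using Finset.induction_on with
  | empty => simpa using supportedOn_zero S
  | insert _ _ hnotmem ih =>
    rw [Finset.sum_insert hnotmem]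
    exact supportedOn_add (h _ (Finset.mem_insert_self _ _))
      (ih fun k hk => h k (Finset.mem_insert_of_mem hk))

lemma supportedOn_mono {S S' : Finset V} (hSS : S ⊆ S')
    {A : Matrix (V → Fin d) (V → Fin d) ℂ} (h : SupportedOn d S A) :
    SupportedOn d S' A := by
  rw [supportedOn_iff] at h ⊢
  obtain ⟨B, rfl⟩ := h
  refine ⟨fun a b => if ∀ v : {v // v ∈ S'}, v.1 ∉ S → a v = b v
    then B (fun w => a ⟨w.1, hSS w.2⟩) (fun w => b ⟨w.1, hSS w.2⟩) else 0, ?_⟩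
  funext x y
  simp only [embed]
  by_cases h1 : ∀ v ∉ S', x v = y v
  · rw [if_pos h1]
    by_cases h2 : ∀ v : {v // v ∈ S'}, v.1 ∉ S → res S' x v = res S' y v
    · rw [if_pos h2, if_pos]
      · rfl
      · intro v hv
        by_cases hv' : v ∈ S'
        · exact h2 ⟨v, hv'⟩ hv
        · exact h1 v hv'
    · rw [if_neg h2, if_neg]
      intro hc
      exact h2 fun v hv => hc v.1 hv
  · rw [if_neg h1, if_neg]
    intro hc
    apply h1
    intro v hv
    exact hc v (fun hvS => hv (hSS hvS))

lemma supportedOn_onSite (v : V) (A : Matrix (Fin d) (Fin d) ℂ) :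
    SupportedOn d {v} (onSite d v A) := by
  refine ⟨fun a b => A (a ⟨v, Finset.mem_singleton_self v⟩) (b ⟨v, Finset.mem_singleton_self v⟩),
    fun x y => ?_⟩
  simp only [onSite]
  refine if_congr ?_ rfl rfl
  constructor
  · intro h w hw
    exact h w (by simpa using hw)
  · intro h w hw
    exact h w (by simpa using hw)

lemma commute_of_supported {S T : Finset V} (hST : Disjoint S T)
    {A A' : Matrix (V → Fin d) (V → Fin d) ℂ}
    (h : SupportedOn d S A) (h' : SupportedOn d T A') : Commute A A' := by
  rw [supportedOn_iff] at h h'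
  obtain ⟨B, rfl⟩ := h
  obtain ⟨C, rfl⟩ := h'
  exact commute_embed_disjoint hST B C

lemma ntr_mul_of_supported (hd : 0 < d) {S T : Finset V} (hST : Disjoint S T)
    {A A' : Matrix (V → Fin d) (V → Fin d) ℂ}
    (h : SupportedOn d S A) (h' : SupportedOn d T A') : ntr (A * A') = ntr A * ntr A' := by
  rw [supportedOn_iff] at h h'
  obtain ⟨B, rfl⟩ := h
  obtain ⟨C, rfl⟩ := h'
  exact ntr_embed_mul_disjoint hd hST B C

lemma ntr_exp_add_of_supported (hd : 0 < d) {S T : Finset V} (hST : Disjoint S T)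
    {A A' : Matrix (V → Fin d) (V → Fin d) ℂ}
    (h : SupportedOn d S A) (h' : SupportedOn d T A') :
    ntr (NormedSpace.exp (A + A')) = ntr (NormedSpace.exp A) * ntr (NormedSpace.exp A') := by
  rw [Matrix.exp_add_of_commute A A' (commute_of_supported hST h h')]
  exact ntr_mul_of_supported hd hST (supportedOn_exp h) (supportedOn_exp h')

end Polymer

namespace Polymer

variable {ι : Type*} [DecidableEq ι]

lemma neg_one_pow_sum (s : Finset ι) :
    ∑ T ∈ s.powerset, (-1 : ℂ) ^ T.card = if s = ∅ then 1 else 0 := by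
  have := Finset.sum_powerset_neg_one_pow_card (x := s)
  have h2 : ((∑ m ∈ s.powerset, (-1 : ℤ) ^ m.card : ℤ) : ℂ)
      = ∑ T ∈ s.powerset, (-1 : ℂ) ^ T.card := by push_cast; rfl
  rw [← h2, this]
  split <;> simp

lemma mobius (E : Finset ι) (F : Finset ι → ℂ) :
    F E = ∑ S ∈ E.powerset, ∑ T ∈ S.powerset, (-1 : ℂ) ^ ((S \ T).card) * F T := by
  classical
  rw [Finset.sum_comm' (s' := fun T => E.powerset.filter (fun S => T ⊆ S)) (t' := E.powerset)
    (by
      intro S T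
      simp only [Finset.mem_powerset, Finset.mem_filter]
      constructor
      · rintro ⟨h1, h2⟩
        exact ⟨⟨h1, h2⟩, h2.trans h1⟩
      · rintro ⟨⟨h1, h2⟩, _⟩
        exact ⟨h1, h2⟩)]
  have inner : ∀ T ∈ E.powerset,
      ∑ S ∈ E.powerset.filter (fun S => T ⊆ S), (-1 : ℂ) ^ ((S \ T).card) * F T
        = (if E ⊆ T then 1 else 0) * F T := by
    intro T hT
    rw [Finset.mem_powerset] at hT
    have hbij : ∑ S ∈ E.powerset.filter (fun S => T ⊆ S), (-1 : ℂ) ^ ((S \ T).card)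
        = ∑ U ∈ (E \ T).powerset, (-1 : ℂ) ^ U.card := by
      apply Finset.sum_nbij' (i := fun S => S \ T) (j := fun U => T ∪ U)
      · intro S hS
        simp only [Finset.mem_filter, Finset.mem_powerset] at hS
        simp only [Finset.mem_powerset]
        exact Finset.sdiff_subset_sdiff hS.1 (le_refl T)
      · intro U hU
        simp only [Finset.mem_powerset] at hU
        simp only [Finset.mem_filter, Finset.mem_powerset]
        refine ⟨Finset.union_subset hT (hU.trans (Finset.sdiff_subset)), Finset.subset_union_left⟩
      · intro S hS
        simp only [Finset.mem_filter, Finset.mem_powerset] at hS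
        exact Finset.union_sdiff_of_subset hS.2
      · intro U hU
        simp only [Finset.mem_powerset] at hU
        rw [Finset.union_sdiff_cancel_left]
        exact Finset.disjoint_left.mpr fun a haT haU => (Finset.mem_sdiff.mp (hU haU)).2 haT
      · intro S hS
        rfl
    rw [← Finset.sum_mul, hbij, neg_one_pow_sum]
    simp only [Finset.sdiff_eq_empty_iff_subset]
  rw [Finset.sum_congr rfl inner,
    Finset.sum_eq_single_of_mem E (Finset.mem_powerset_self E)
      (fun x hx hne => by
        rw [if_neg, zero_mul]
        intro hc
        exact hne (Finset.Subset.antisymm (Finset.mem_powerset.mp hx) hc)),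
    if_pos (subset_refl E), one_mul]

lemma sum_powerset_union {s t : Finset ι} (hst : Disjoint s t) (f : Finset ι → ℂ) :
    ∑ T ∈ (s ∪ t).powerset, f T = ∑ T₁ ∈ s.powerset, ∑ T₂ ∈ t.powerset, f (T₁ ∪ T₂) := by
  rw [← Finset.sum_product']
  apply Finset.sum_nbij' (i := fun T => (T ∩ s, T ∩ t)) (j := fun p => p.1 ∪ p.2)
  · intro T hT
    simp only [Finset.mem_powerset] at hT
    simp only [Finset.mem_product, Finset.mem_powerset]
    exact ⟨Finset.inter_subset_right, Finset.inter_subset_right⟩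
  · intro p hp
    simp only [Finset.mem_product, Finset.mem_powerset] at hp
    simp only [Finset.mem_powerset]
    exact Finset.union_subset (hp.1.trans Finset.subset_union_left)
      (hp.2.trans Finset.subset_union_right)
  · intro T hT
    simp only [Finset.mem_powerset] at hT
    rw [← Finset.inter_union_distrib_left, Finset.inter_eq_left.mpr hT]
  · intro p hp
    simp only [Finset.mem_product, Finset.mem_powerset] at hp
    have h1 : (p.1 ∪ p.2) ∩ s = p.1 := by
      rw [Finset.union_inter_distrib_right, Finset.inter_eq_left.mpr hp.1,
        (Finset.disjoint_iff_inter_eq_empty.mp (hst.symm.mono_left hp.2 : Disjoint p.2 s)),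
        Finset.union_empty]
    have h2 : (p.1 ∪ p.2) ∩ t = p.2 := by
      rw [Finset.union_inter_distrib_right, Finset.inter_eq_left.mpr hp.2,
        (Finset.disjoint_iff_inter_eq_empty.mp (hst.mono_left hp.1 : Disjoint p.1 t)),
        Finset.empty_union]
    exact Prod.ext h1 h2
  · intro T hT
    simp only []
    rw [← Finset.inter_union_distrib_left,
      Finset.inter_eq_left.mpr (Finset.mem_powerset.mp hT)]

end Polymer

namespace Polymer

variable {V ι : Type*} [DecidableEq V] [DecidableEq ι] (vert : ι → Finset V) (S : Finset ι)

def R (a b : ι) : Prop := a ∈ S ∧ b ∈ S ∧ (vert a ∩ vert b).Nonempty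

abbrev reach (a b : ι) : Prop := Relation.ReflTransGen (R vert S) a b

open Classical in
noncomputable def comp (e : ι) : Finset ι := S.filter (reach vert S e)

variable {vert S}

lemma reach_symm {a b : ι} (h : reach vert S a b) : reach vert S b a := by
  refine (@Relation.ReflTransGen.symmetric _ (R vert S) ⟨?_⟩).symm _ _ h
  rintro x y ⟨hx, hy, hn⟩
  exact ⟨hy, hx, by rwa [Finset.inter_comm]⟩

lemma mem_comp {e f : ι} : f ∈ comp vert S e ↔ f ∈ S ∧ reach vert S e f := by
  classical
  simp [comp]

lemma comp_subset (e : ι) : comp vert S e ⊆ S := by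
  intro f hf
  exact (mem_comp.mp hf).1

lemma mem_comp_self {e : ι} (he : e ∈ S) : e ∈ comp vert S e :=
  mem_comp.mpr ⟨he, Relation.ReflTransGen.refl⟩

lemma comp_eq_of_reach {e f : ι} (h : reach vert S e f) :
    comp vert S e = comp vert S f := by
  ext g
  simp only [mem_comp]
  exact ⟨fun ⟨hg, hr⟩ => ⟨hg, (reach_symm h).trans hr⟩, fun ⟨hg, hr⟩ => ⟨hg, h.trans hr⟩⟩

lemma components_eq_image : components vert S = S.image (comp vert S) := rfl

lemma mem_components {γ : Finset ι} :
    γ ∈ components vert S ↔ ∃ e ∈ S, γ = comp vert S e := by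
  rw [components_eq_image]
  simp only [Finset.mem_image]
  exact ⟨fun ⟨e, he, h⟩ => ⟨e, he, h.symm⟩, fun ⟨e, he, h⟩ => ⟨e, he, h.symm⟩⟩

lemma comp_eq_of_mem {e : ι} {γ : Finset ι} (hγ : γ ∈ components vert S) (he : e ∈ γ) :
    γ = comp vert S e := by
  obtain ⟨f, hf, rfl⟩ := mem_components.mp hγ
  exact comp_eq_of_reach (mem_comp.mp he).2

lemma components_nonempty {γ : Finset ι} (hγ : γ ∈ components vert S) : γ.Nonempty := by
  obtain ⟨e, he, rfl⟩ := mem_components.mp hγ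
  exact ⟨e, mem_comp_self he⟩

lemma components_subset {γ : Finset ι} (hγ : γ ∈ components vert S) : γ ⊆ S := by
  obtain ⟨e, he, rfl⟩ := mem_components.mp hγ
  exact comp_subset e

lemma components_edge_disjoint {γ γ' : Finset ι} (hγ : γ ∈ components vert S)
    (hγ' : γ' ∈ components vert S) (hne : γ ≠ γ') : Disjoint γ γ' := by
  rw [Finset.disjoint_left]
  intro e heγ heγ'
  exact hne ((comp_eq_of_mem hγ heγ).trans (comp_eq_of_mem hγ' heγ').symm)

lemma components_vert_disjoint {γ γ' : Finset ι} (hγ : γ ∈ components vert S)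
    (hγ' : γ' ∈ components vert S) (hne : γ ≠ γ') :
    Disjoint (γ.biUnion vert) (γ'.biUnion vert) := by
  rw [Finset.disjoint_left]
  intro v hv hv'
  simp only [Finset.mem_biUnion] at hv hv'
  obtain ⟨a, ha, hva⟩ := hv
  obtain ⟨b, hb, hvb⟩ := hv'
  have hr : reach vert S a b :=
    Relation.ReflTransGen.single ⟨components_subset hγ ha, components_subset hγ' hb, v, by
      simp [Finset.mem_inter, hva, hvb]⟩
  apply hne
  rw [comp_eq_of_mem hγ ha, comp_eq_of_mem hγ' hb]
  exact comp_eq_of_reach hr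

lemma biUnion_components : (components vert S).biUnion id = S := by
  ext e
  simp only [Finset.mem_biUnion, id]
  constructor
  · rintro ⟨γ, hγ, he⟩
    exact components_subset hγ he
  · intro he
    exact ⟨comp vert S e, mem_components.mpr ⟨e, he, rfl⟩, mem_comp_self he⟩

lemma reach_restrict {e a b : ι} (hab : reach vert S a b) (hea : reach vert S e a) :
    Relation.ReflTransGen (R vert (comp vert S e)) a b := by
  induction hab with
  | refl => exact Relation.ReflTransGen.refl
  | @tail c b' hac hcb ih =>
    refine ih.tail ?_
    exact ⟨mem_comp.mpr ⟨hcb.1, hea.trans hac⟩,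
      mem_comp.mpr ⟨hcb.2.1, (hea.trans hac).tail hcb⟩, hcb.2.2⟩

lemma components_connects {γ : Finset ι} (hγ : γ ∈ components vert S) : Connects vert γ := by
  intro a ha b hb
  have hγa := comp_eq_of_mem hγ ha
  obtain ⟨e, he, rfl⟩ := mem_components.mp hγ
  have hra : reach vert S e a := (mem_comp.mp ha).2
  have hrb : reach vert S e b := (mem_comp.mp hb).2
  have := reach_restrict ((reach_symm hra).trans hrb) hra
  exact this

-- reconstruction: components of a disjoint union of connected pieces
lemma components_of_admissible {Γ : Finset (Finset ι)}
    (hconn : ∀ γ ∈ Γ, γ.Nonempty ∧ Connects vert γ)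
    (hdisj : ∀ γ ∈ Γ, ∀ γ' ∈ Γ, γ ≠ γ' → Disjoint (γ.biUnion vert) (γ'.biUnion vert))
    (hvert : ∀ γ ∈ Γ, ∀ e ∈ γ, (vert e).Nonempty) :
    components vert (Γ.biUnion id) = Γ := by
  classical
  set S := Γ.biUnion id with hS
  have hmem : ∀ e ∈ S, ∃ γ ∈ Γ, e ∈ γ := by
    intro e he
    simpa [hS, Finset.mem_biUnion] using he
  have huniq : ∀ {e γ γ'}, γ ∈ Γ → γ' ∈ Γ → e ∈ γ → e ∈ γ' → γ = γ' := by
    intro e γ γ' hγ hγ' he he'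
    by_contra hne
    obtain ⟨v, hv⟩ := hvert γ hγ e he
    exact Finset.disjoint_left.mp (hdisj γ hγ γ' hγ' hne)
      (Finset.mem_biUnion.mpr ⟨e, he, hv⟩) (Finset.mem_biUnion.mpr ⟨e, he', hv⟩)
  have hcomp : ∀ {e γ}, γ ∈ Γ → e ∈ γ → comp vert S e = γ := by
    intro e γ hγ he
    ext f
    rw [mem_comp]
    constructor
    · rintro ⟨hf, hr⟩
      clear hf
      induction hr with
      | refl => exact he
      | tail hac hcb ih =>
        rename_i c b
        have hc : c ∈ γ := ih
        obtain ⟨hcS, hbS, v, hv⟩ := hcb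
        obtain ⟨γ', hγ', hb⟩ := hmem b hbS
        have : γ' = γ := by
          by_contra hne
          rw [Finset.mem_inter] at hv
          exact Finset.disjoint_left.mp (hdisj γ hγ γ' hγ' (Ne.symm hne))
            (Finset.mem_biUnion.mpr ⟨c, hc, hv.1⟩) (Finset.mem_biUnion.mpr ⟨b, hb, hv.2⟩)
        exact this ▸ hb
    · intro hf
      have hfS : f ∈ S := Finset.mem_biUnion.mpr ⟨γ, hγ, hf⟩
      refine ⟨hfS, ?_⟩
      have hreach := (hconn γ hγ).2 e he f hf
      refine Relation.ReflTransGen.mono ?_ _ _ hreach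
      rintro a b ⟨ha, hb, hn⟩
      exact ⟨Finset.mem_biUnion.mpr ⟨γ, hγ, ha⟩, Finset.mem_biUnion.mpr ⟨γ, hγ, hb⟩, hn⟩
  ext γ
  rw [mem_components]
  constructor
  · rintro ⟨e, he, rfl⟩
    obtain ⟨γ', hγ', he'⟩ := hmem e he
    rw [hcomp hγ' he']
    exact hγ'
  · intro hγ
    obtain ⟨e, he⟩ := (hconn γ hγ).1
    exact ⟨e, Finset.mem_biUnion.mpr ⟨γ, hγ, he⟩, (hcomp hγ he).symm⟩

end Polymer

namespace Polymer

variable {V ι : Type*} [Fintype V] [DecidableEq V] [DecidableEq ι]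
  {d : ℕ} {Φ : V → Matrix (Fin d) (Fin d) ℂ}
  {Ψ : ι → Matrix (V → Fin d) (V → Fin d) ℂ} {β : ℝ} {lam : ℂ}

noncomputable def Ham (d : ℕ) (Φ : V → Matrix (Fin d) (Fin d) ℂ)
    (Ψ : ι → Matrix (V → Fin d) (V → Fin d) ℂ) (β : ℝ) (lam : ℂ)
    (A : Finset V) (T : Finset ι) : Matrix (V → Fin d) (V → Fin d) ℂ :=
  (-(β : ℂ)) • ((∑ v ∈ A, onSite d v (Φ v)) + lam • ∑ e ∈ T, Ψ e)

noncomputable def Zf (d : ℕ) (Φ : V → Matrix (Fin d) (Fin d) ℂ)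
    (Ψ : ι → Matrix (V → Fin d) (V → Fin d) ℂ) (β : ℝ) (lam : ℂ)
    (A : Finset V) (T : Finset ι) : ℂ :=
  ntr (NormedSpace.exp (Ham d Φ Ψ β lam A T))

lemma supportedOn_Ham {A : Finset V} {T : Finset ι}
    (hsupp : ∀ e ∈ T, SupportedOn d A (Ψ e)) :
    SupportedOn d A (Ham d Φ Ψ β lam A T) := by
  apply supportedOn_smul
  apply supportedOn_add
  · apply supportedOn_sum
    intro v hv
    exact supportedOn_mono (Finset.singleton_subset_iff.mpr hv) (supportedOn_onSite v (Φ v))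
  · exact supportedOn_smul _ (supportedOn_sum _ _ hsupp)

lemma Zf_mul (hd : 0 < d) {A₁ A₂ : Finset V} {T₁ T₂ : Finset ι}
    (hA : Disjoint A₁ A₂) (hT : Disjoint T₁ T₂)
    (h1 : ∀ e ∈ T₁, SupportedOn d A₁ (Ψ e)) (h2 : ∀ e ∈ T₂, SupportedOn d A₂ (Ψ e)) :
    Zf d Φ Ψ β lam (A₁ ∪ A₂) (T₁ ∪ T₂)
      = Zf d Φ Ψ β lam A₁ T₁ * Zf d Φ Ψ β lam A₂ T₂ := by
  have hHam : Ham d Φ Ψ β lam (A₁ ∪ A₂) (T₁ ∪ T₂)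
      = Ham d Φ Ψ β lam A₁ T₁ + Ham d Φ Ψ β lam A₂ T₂ := by
    simp only [Ham]
    rw [Finset.sum_union hA, Finset.sum_union hT]
    module
  rw [Zf, hHam]
  exact ntr_exp_add_of_supported hd hA (supportedOn_Ham h1) (supportedOn_Ham h2)

lemma Zf_empty_right {A : Finset V} : Zf d Φ Ψ β lam A ∅
    = ntr (NormedSpace.exp ((-(β : ℂ)) • ∑ v ∈ A, onSite d v (Φ v))) := by
  simp [Zf, Ham]

lemma Zf_empty_empty (hd : 0 < d) : Zf d Φ Ψ β lam (∅ : Finset V) (∅ : Finset ι) = 1 := by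
  have h0 : Ham d Φ Ψ β lam (∅ : Finset V) (∅ : Finset ι) = 0 := by
    simp [Ham]
  rw [Zf, h0, NormedSpace.exp_zero, ntr, Matrix.trace_one]
  exact div_self (card_fun_ne_zero hd)

lemma biUnion_union' {α : Type*} [DecidableEq α] (s t : Finset α) (f : α → Finset V) :
    (s ∪ t).biUnion f = s.biUnion f ∪ t.biUnion f := by
  ext v
  simp only [Finset.mem_biUnion, Finset.mem_union]
  constructor
  · rintro ⟨a, ha | ha, hv⟩
    · exact Or.inl ⟨a, ha, hv⟩
    · exact Or.inr ⟨a, ha, hv⟩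
  · rintro (⟨a, ha, hv⟩ | ⟨a, ha, hv⟩)
    · exact ⟨a, Or.inl ha, hv⟩
    · exact ⟨a, Or.inr ha, hv⟩

lemma Zf_prod_empty (hd : 0 < d) (vert : ι → Finset V) (C : Finset (Finset ι))
    (hvd : ∀ γ ∈ C, ∀ γ' ∈ C, γ ≠ γ' →
      Disjoint (γ.biUnion vert) (γ'.biUnion vert)) :
    Zf d Φ Ψ β lam ((C.biUnion id).biUnion vert) ∅
      = ∏ γ ∈ C, Zf d Φ Ψ β lam (γ.biUnion vert) ∅ := by
  classical
  revert hvd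
  induction C using Finset.induction_on with
  | empty =>
    intro _
    simp [Zf_empty_empty hd]
  | @insert γ₀ C' hγ₀ ih =>
    intro hvd
    have hvd' : ∀ γ ∈ C', ∀ γ' ∈ C', γ ≠ γ' →
        Disjoint (γ.biUnion vert) (γ'.biUnion vert) :=
      fun γ h γ' h' => hvd γ (Finset.mem_insert_of_mem h) γ' (Finset.mem_insert_of_mem h')
    have hdisjV : Disjoint (γ₀.biUnion vert) ((C'.biUnion id).biUnion vert) := by
      rw [Finset.biUnion_biUnion]
      rw [Finset.disjoint_biUnion_right]
      intro γ' h'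
      exact hvd γ₀ (Finset.mem_insert_self _ _) γ' (Finset.mem_insert_of_mem h')
        (fun he => hγ₀ (he ▸ h'))
    have hmul := Zf_mul (Φ := Φ) (Ψ := Ψ) (β := β) (lam := lam) (T₁ := (∅ : Finset ι))
      (T₂ := (∅ : Finset ι)) hd hdisjV (by simp) (by simp) (by simp)
    rw [Finset.union_self (∅ : Finset ι)] at hmul
    rw [show ((insert γ₀ C').biUnion id : Finset ι) = γ₀ ∪ C'.biUnion id from Finset.biUnion_insert,
      biUnion_union', hmul, ih hvd', Finset.prod_insert hγ₀]

lemma Zf_prod_sum (hd : 0 < d) (vert : ι → Finset V) (C : Finset (Finset ι))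
    (hvd : ∀ γ ∈ C, ∀ γ' ∈ C, γ ≠ γ' →
      Disjoint (γ.biUnion vert) (γ'.biUnion vert))
    (hed : ∀ γ ∈ C, ∀ γ' ∈ C, γ ≠ γ' → Disjoint γ γ')
    (hsupp : ∀ e ∈ C.biUnion id, SupportedOn d (vert e) (Ψ e)) :
    ∑ T ∈ (C.biUnion id).powerset, (-1 : ℂ) ^ (((C.biUnion id) \ T).card)
        * Zf d Φ Ψ β lam ((C.biUnion id).biUnion vert) T
      = ∏ γ ∈ C, ∑ T ∈ γ.powerset, (-1 : ℂ) ^ ((γ \ T).card)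
        * Zf d Φ Ψ β lam (γ.biUnion vert) T := by
  classical
  revert hvd hed hsupp
  induction C using Finset.induction_on with
  | empty =>
    intro _ _ _
    simp [Zf_empty_empty hd]
  | @insert γ₀ C' hγ₀ ih =>
    intro hvd hed hsupp
    have hvd' : ∀ γ ∈ C', ∀ γ' ∈ C', γ ≠ γ' →
        Disjoint (γ.biUnion vert) (γ'.biUnion vert) :=
      fun γ h γ' h' => hvd γ (Finset.mem_insert_of_mem h) γ' (Finset.mem_insert_of_mem h')
    have hed' : ∀ γ ∈ C', ∀ γ' ∈ C', γ ≠ γ' → Disjoint γ γ' :=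
      fun γ h γ' h' => hed γ (Finset.mem_insert_of_mem h) γ' (Finset.mem_insert_of_mem h')
    have hsupp' : ∀ e ∈ C'.biUnion id, SupportedOn d (vert e) (Ψ e) := by
      intro e he
      apply hsupp
      obtain ⟨γ', h1, h2⟩ := Finset.mem_biUnion.mp he
      exact Finset.mem_biUnion.mpr ⟨γ', Finset.mem_insert_of_mem h1, h2⟩
    set U := C'.biUnion id with hU
    have hdisjE : Disjoint γ₀ U := by
      rw [hU, Finset.disjoint_biUnion_right]
      intro γ' h'
      exact hed γ₀ (Finset.mem_insert_self _ _) γ' (Finset.mem_insert_of_mem h')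
        (fun he => hγ₀ (he ▸ h'))
    have hdisjV : Disjoint (γ₀.biUnion vert) (U.biUnion vert) := by
      rw [hU, Finset.biUnion_biUnion, Finset.disjoint_biUnion_right]
      intro γ' h'
      exact hvd γ₀ (Finset.mem_insert_self _ _) γ' (Finset.mem_insert_of_mem h')
        (fun he => hγ₀ (he ▸ h'))
    rw [show ((insert γ₀ C').biUnion id : Finset ι) = γ₀ ∪ U from Finset.biUnion_insert,
      sum_powerset_union hdisjE]
    have hterm : ∀ T₁ ∈ γ₀.powerset, ∀ T₂ ∈ U.powerset,
        (-1 : ℂ) ^ (((γ₀ ∪ U) \ (T₁ ∪ T₂)).card)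
            * Zf d Φ Ψ β lam ((γ₀ ∪ U).biUnion vert) (T₁ ∪ T₂)
          = ((-1 : ℂ) ^ ((γ₀ \ T₁).card) * Zf d Φ Ψ β lam (γ₀.biUnion vert) T₁)
            * ((-1 : ℂ) ^ ((U \ T₂).card) * Zf d Φ Ψ β lam (U.biUnion vert) T₂) := by
      intro T₁ h1 T₂ h2
      rw [Finset.mem_powerset] at h1 h2
      have hset : (γ₀ ∪ U) \ (T₁ ∪ T₂) = (γ₀ \ T₁) ∪ (U \ T₂) := by
        ext a
        simp only [Finset.mem_sdiff, Finset.mem_union, not_or]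
        constructor
        · rintro ⟨ha | ha, hn1, hn2⟩
          · exact Or.inl ⟨ha, hn1⟩
          · exact Or.inr ⟨ha, hn2⟩
        · rintro (⟨ha, hn⟩ | ⟨ha, hn⟩)
          · exact ⟨Or.inl ha, hn,
              fun hh => Finset.disjoint_left.mp hdisjE ha (h2 hh)⟩
          · exact ⟨Or.inr ha,
              fun hh => Finset.disjoint_left.mp hdisjE (h1 hh) ha, hn⟩
      have hcard : ((γ₀ ∪ U) \ (T₁ ∪ T₂)).card = (γ₀ \ T₁).card + (U \ T₂).card := by
        rw [hset, Finset.card_union_of_disjoint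
          (hdisjE.mono Finset.sdiff_subset Finset.sdiff_subset)]
      have hs1 : ∀ e ∈ T₁, SupportedOn d (γ₀.biUnion vert) (Ψ e) := by
        intro e he
        exact supportedOn_mono (Finset.subset_biUnion_of_mem vert (h1 he))
          (hsupp e (Finset.mem_biUnion.mpr ⟨γ₀, Finset.mem_insert_self _ _, h1 he⟩))
      have hs2 : ∀ e ∈ T₂, SupportedOn d (U.biUnion vert) (Ψ e) := by
        intro e he
        refine supportedOn_mono (Finset.subset_biUnion_of_mem vert (h2 he)) ?_
        apply hsupp'
        exact h2 he
      rw [hcard, pow_add, biUnion_union', Zf_mul hd hdisjV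
        (hdisjE.mono h1 h2) hs1 hs2]
      ring
    rw [Finset.sum_congr rfl (fun T₁ h1 => Finset.sum_congr rfl (fun T₂ h2 => hterm T₁ h1 T₂ h2)),
      ← Finset.sum_mul_sum, ih hvd' hed' hsupp', Finset.prod_insert hγ₀]

lemma ntr_exp_hermitian_ne_zero (hd : 0 < d) {H : Matrix (V → Fin d) (V → Fin d) ℂ}
    (hH : H.IsHermitian) : ntr (NormedSpace.exp H) ≠ 0 := by
  have hx0 : Nonempty (V → Fin d) := ⟨fun _ => ⟨0, hd⟩⟩
  have hhalf : ((1/2 : ℂ) • H).IsHermitian := by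
    rw [Matrix.IsHermitian, Matrix.conjTranspose_smul, hH.eq]
    norm_num
  set Y := NormedSpace.exp ((1/2 : ℂ) • H) with hYdef
  have hY : Y.conjTranspose = Y := Matrix.IsHermitian.exp hhalf
  have hYY : NormedSpace.exp H = Y * Y := by
    rw [hYdef, ← Matrix.exp_add_of_commute _ _ (Commute.refl _)]
    congr 1
    rw [← add_smul]
    norm_num
  have hunit : IsUnit Y := Matrix.isUnit_exp _
  have htr : Matrix.trace (NormedSpace.exp H)
      = ((∑ x : V → Fin d, ∑ y : V → Fin d, Complex.normSq (Y y x) : ℝ) : ℂ) := by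
    rw [hYY, Matrix.trace]
    push_cast
    apply Finset.sum_congr rfl
    intro x _
    rw [Matrix.diag_apply, Matrix.mul_apply]
    apply Finset.sum_congr rfl
    intro y _
    have hxy : Y x y = (starRingEnd ℂ) (Y y x) := by
      conv_lhs => rw [← hY]
      rw [Matrix.conjTranspose_apply, Complex.star_def]
    rw [hxy]
    exact (Complex.normSq_eq_conj_mul_self).symm
  have hYne : Y ≠ 0 := by
    intro h0
    obtain ⟨u, hu⟩ := hunit
    have h1 : Y * (↑u⁻¹ : Matrix (V → Fin d) (V → Fin d) ℂ) = 1 := by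
      rw [← hu, Units.mul_inv]
    rw [h0, zero_mul] at h1
    have h2 := congrFun (congrFun h1 (Classical.arbitrary _)) (Classical.arbitrary _)
    simp [Matrix.one_apply] at h2
  have htrne : Matrix.trace (NormedSpace.exp H) ≠ 0 := by
    rw [htr, Ne, Complex.ofReal_eq_zero]
    intro hsum
    apply hYne
    have h1 := (Finset.sum_eq_zero_iff_of_nonneg
      (fun x _ => Finset.sum_nonneg fun y _ => Complex.normSq_nonneg _)).mp hsum
    ext a b
    have h2 := (Finset.sum_eq_zero_iff_of_nonneg
      (fun y _ => Complex.normSq_nonneg (Y y b))).mp (h1 b (Finset.mem_univ b))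
      a (Finset.mem_univ a)
    simpa using Complex.normSq_eq_zero.mp h2
  rw [ntr]
  exact div_ne_zero htrne (card_fun_ne_zero hd)

lemma onSite_isHermitian {v : V} {A : Matrix (Fin d) (Fin d) ℂ} (hA : A.IsHermitian) :
    (onSite d v A).IsHermitian := by
  ext x y
  rw [Matrix.conjTranspose_apply]
  simp only [onSite]
  by_cases h : ∀ w, w ≠ v → y w = x w
  · rw [if_pos h, if_pos (fun w hw => (h w hw).symm), ← Matrix.conjTranspose_apply, hA.eq]
  · rw [if_neg h, if_neg (fun hc => h (fun w hw => (hc w hw).symm)), star_zero]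

lemma Zf_empty_ne_zero (hd : 0 < d) (hΦ : ∀ v, (Φ v).IsHermitian) (A : Finset V) :
    Zf d Φ Ψ β lam A (∅ : Finset ι) ≠ 0 := by
  rw [Zf]
  apply ntr_exp_hermitian_ne_zero hd
  have hsum : (∑ v ∈ A, onSite d v (Φ v)).IsHermitian := by
    rw [Matrix.IsHermitian, Matrix.conjTranspose_sum]
    exact Finset.sum_congr rfl fun v _ => (onSite_isHermitian (hΦ v)).eq
  have h0 : Ham d Φ Ψ β lam A (∅ : Finset ι) = (-(β : ℂ)) • ∑ v ∈ A, onSite d v (Φ v) := by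
    simp [Ham]
  rw [h0, Matrix.IsHermitian, Matrix.conjTranspose_smul, hsum.eq]
  congr 1
  simp [Complex.star_def, Complex.conj_ofReal]

end Polymer

open Classical in
/-- Abstract polymer model representation of the partition function:
`Z_G(β,λ) = Z_G(β,0) ∑_{S⊆E} ∏_{γ ∈ components(S)} w_γ`, equivalently
`Z_G(β,λ) = Z_G(β,0) ∑_Γ ∏_{γ∈Γ} w_γ` over admissible sets `Γ` of polymers. -/
theorem stmt2 {V ι : Type*} [Fintype V] [DecidableEq V] [DecidableEq ι]
    (d : ℕ) (hd : 0 < d)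
    (E : Finset ι) (vert : ι → Finset V) (hvert : ∀ e ∈ E, (vert e).Nonempty)
    (Φ : V → Matrix (Fin d) (Fin d) ℂ) (hΦ : ∀ v, (Φ v).IsHermitian)
    (Ψ : ι → Matrix (V → Fin d) (V → Fin d) ℂ)
    (hΨ : ∀ e ∈ E, (Ψ e).IsHermitian)
    (hΨsupp : ∀ e ∈ E, SupportedOn d (vert e) (Ψ e))
    (β : ℝ) (hβ : 0 < β) (lam : ℂ)
    (HΦ : Matrix (V → Fin d) (V → Fin d) ℂ) (hHΦ : HΦ = ∑ v : V, onSite d v (Φ v))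
    (HΨ : Matrix (V → Fin d) (V → Fin d) ℂ) (hHΨ : HΨ = ∑ e ∈ E, Ψ e) :
    (ntr (NormedSpace.exp ((-(β : ℂ)) • (HΦ + lam • HΨ))) =
      ntr (NormedSpace.exp ((-(β : ℂ)) • HΦ)) *
        ∑ S ∈ E.powerset, ∏ γ ∈ components vert S, polymerWeight d vert Φ Ψ β lam γ) ∧
    (ntr (NormedSpace.exp ((-(β : ℂ)) • (HΦ + lam • HΨ))) =
      ntr (NormedSpace.exp ((-(β : ℂ)) • HΦ)) *
        ∑ Γ ∈ E.powerset.powerset.filter (fun Γ =>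
            (∀ γ ∈ Γ, γ.Nonempty ∧ Connects vert γ) ∧
            (∀ γ ∈ Γ, ∀ γ' ∈ Γ, γ ≠ γ' →
              Disjoint (γ.biUnion vert) (γ'.biUnion vert))),
          ∏ γ ∈ Γ, polymerWeight d vert Φ Ψ β lam γ) := by
  classical
  subst hHΦ
  subst hHΨ
  set F : Finset ι → ℂ := fun T => ntr (NormedSpace.exp ((-(β : ℂ)) •
    ((∑ v : V, onSite d v (Φ v)) + lam • ∑ e ∈ T, Ψ e))) with hF
  have hcoeff : ntr (NormedSpace.exp ((-(β : ℂ)) • ∑ v : V, onSite d v (Φ v))) = F ∅ := by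
    rw [hF]
    simp
  have main : ∀ S ∈ E.powerset,
      ∑ T ∈ S.powerset, (-1 : ℂ) ^ ((S \ T).card) * F T
        = F ∅ * ∏ γ ∈ components vert S, polymerWeight d vert Φ Ψ β lam γ := by
    intro S hSmem
    have hS : S ⊆ E := Finset.mem_powerset.mp hSmem
    set A := S.biUnion vert with hA
    set C := components vert S with hC
    have hsuppS : ∀ e ∈ S, SupportedOn d A (Ψ e) := fun e he =>
      Polymer.supportedOn_mono (Finset.subset_biUnion_of_mem vert he) (hΨsupp e (hS he))
    have hF_split : ∀ T ∈ S.powerset,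
        F T = Polymer.Zf d Φ Ψ β lam A T * Polymer.Zf d Φ Ψ β lam Aᶜ ∅ := by
      intro T hT
      rw [Finset.mem_powerset] at hT
      have hmul := Polymer.Zf_mul (Φ := Φ) (Ψ := Ψ) (β := β) (lam := lam)
        (T₂ := (∅ : Finset ι)) hd disjoint_compl_right (Finset.disjoint_empty_right T)
        (fun e he => hsuppS e (hT he)) (by simp)
      rw [Finset.union_compl, Finset.union_empty] at hmul
      rw [← hmul]
      rfl
    have hvd : ∀ γ ∈ C, ∀ γ' ∈ C, γ ≠ γ' →
        Disjoint (γ.biUnion vert) (γ'.biUnion vert) :=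
      fun γ h γ' h' => Polymer.components_vert_disjoint h h'
    have hed : ∀ γ ∈ C, ∀ γ' ∈ C, γ ≠ γ' → Disjoint γ γ' :=
      fun γ h γ' h' => Polymer.components_edge_disjoint h h'
    have hbU : C.biUnion id = S := Polymer.biUnion_components
    have hps := Polymer.Zf_prod_sum (Φ := Φ) (Ψ := Ψ) (β := β) (lam := lam) hd vert C hvd hed
      (by rw [hbU]; intro e he; exact hΨsupp e (hS he))
    rw [hbU] at hps
    have hpe := Polymer.Zf_prod_empty (Φ := Φ) (Ψ := Ψ) (β := β) (lam := lam) hd vert C hvd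
    rw [hbU] at hpe
    have hlhs : ∑ T ∈ S.powerset, (-1 : ℂ) ^ ((S \ T).card) * F T
        = (∏ γ ∈ C, ∑ T ∈ γ.powerset, (-1 : ℂ) ^ ((γ \ T).card)
            * Polymer.Zf d Φ Ψ β lam (γ.biUnion vert) T) * Polymer.Zf d Φ Ψ β lam Aᶜ ∅ := by
      rw [← hps, Finset.sum_mul]
      exact Finset.sum_congr rfl (fun T hT => by rw [hF_split T hT, mul_assoc])
    have hpw : ∀ γ ∈ C, polymerWeight d vert Φ Ψ β lam γ
        = (∑ T ∈ γ.powerset, (-1 : ℂ) ^ ((γ \ T).card)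
            * Polymer.Zf d Φ Ψ β lam (γ.biUnion vert) T)
          / Polymer.Zf d Φ Ψ β lam (γ.biUnion vert) ∅ := by
      intro γ _
      rw [polymerWeight, Finset.sum_div]
      apply Finset.sum_congr rfl
      intro T hT
      rw [mul_div_assoc]
      congr 1
      rw [Polymer.Zf_empty_right]
      rfl
    have hne : ∀ γ ∈ C, Polymer.Zf d Φ Ψ β lam (γ.biUnion vert) (∅ : Finset ι) ≠ 0 :=
      fun γ _ => Polymer.Zf_empty_ne_zero hd hΦ _
    rw [hlhs, Finset.prod_congr rfl hpw, hF_split ∅ (Finset.empty_mem_powerset S), hpe,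
      Finset.prod_div_distrib]
    have hprodne : ∏ γ ∈ C, Polymer.Zf d Φ Ψ β lam (γ.biUnion vert) (∅ : Finset ι) ≠ 0 :=
      Finset.prod_ne_zero_iff.mpr hne
    field_simp
  have eq1 : ntr (NormedSpace.exp ((-(β : ℂ)) •
      ((∑ v : V, onSite d v (Φ v)) + lam • ∑ e ∈ E, Ψ e)))
      = ntr (NormedSpace.exp ((-(β : ℂ)) • ∑ v : V, onSite d v (Φ v))) *
        ∑ S ∈ E.powerset, ∏ γ ∈ components vert S, polymerWeight d vert Φ Ψ β lam γ := by
    have hm := Polymer.mobius E F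
    rw [hcoeff]
    calc F E = ∑ S ∈ E.powerset, ∑ T ∈ S.powerset, (-1 : ℂ) ^ ((S \ T).card) * F T := hm
      _ = ∑ S ∈ E.powerset, F ∅ * ∏ γ ∈ components vert S, polymerWeight d vert Φ Ψ β lam γ :=
          Finset.sum_congr rfl main
      _ = F ∅ * ∑ S ∈ E.powerset, ∏ γ ∈ components vert S, polymerWeight d vert Φ Ψ β lam γ :=
          (Finset.mul_sum _ _ _).symm
  have hbij : ∑ S ∈ E.powerset, ∏ γ ∈ components vert S, polymerWeight d vert Φ Ψ β lam γ
      = ∑ Γ ∈ E.powerset.powerset.filter (fun Γ =>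
            (∀ γ ∈ Γ, γ.Nonempty ∧ Connects vert γ) ∧
            (∀ γ ∈ Γ, ∀ γ' ∈ Γ, γ ≠ γ' →
              Disjoint (γ.biUnion vert) (γ'.biUnion vert))),
          ∏ γ ∈ Γ, polymerWeight d vert Φ Ψ β lam γ := by
    apply Finset.sum_nbij' (i := fun S => components vert S) (j := fun Γ => Γ.biUnion id)
    · intro S hSmem
      have hS : S ⊆ E := Finset.mem_powerset.mp hSmem
      rw [Finset.mem_filter]
      refine ⟨?_, ?_, ?_⟩
      · rw [Finset.mem_powerset]
        intro γ hγ
        rw [Finset.mem_powerset]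
        exact (Polymer.components_subset hγ).trans hS
      · intro γ hγ
        exact ⟨Polymer.components_nonempty hγ, Polymer.components_connects hγ⟩
      · intro γ hγ γ' hγ' hne
        exact Polymer.components_vert_disjoint hγ hγ' hne
    · intro Γ hΓ
      rw [Finset.mem_filter, Finset.mem_powerset] at hΓ
      rw [Finset.mem_powerset]
      intro e he
      obtain ⟨γ, hγ, heγ⟩ := Finset.mem_biUnion.mp he
      exact Finset.mem_powerset.mp (hΓ.1 hγ) heγ
    · intro S hSmem
      exact Polymer.biUnion_components
    · intro Γ hΓ
      rw [Finset.mem_filter, Finset.mem_powerset] at hΓ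
      exact Polymer.components_of_admissible hΓ.2.1 hΓ.2.2
        (fun γ hγ e he => hvert e (Finset.mem_powerset.mp (hΓ.1 hγ) he))
    · intro S hSmem
      rfl
  exact ⟨eq1, eq1.trans (by rw [hbij])⟩
end

section
/- Chain-rule sampler accuracy (mathematical core of Lemma 4): Let n∈ℕ, d≥2, 0<ε≤1, and let μ be a probability distribution on [d]^n with μ(x)>0 for every prefix x. Suppose μ̂ assigns to every prefix x∈[d]^i (1≤i≤n) a number μ̂(x)>0 with |μ(x)−μ̂(x)| ≤ (ε/(3n))·μ(x). Define the distribution ν on [d]^n by ν(x) := ∏_{i=1}^{n} μ̂(x_{≺i}x_i)/∑_{y∈[d]}μ̂(x_{≺i}y). Then ν is a probability distribution on [d]^n and ‖μ − ν‖_TV ≤ ε. -/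
open scoped BigOperators

/-- The marginal probability of a prefix `x ∈ [d]^i` under a distribution `μ` on `[d]^n`:
the probability that the first `i` coordinates equal `x`. -/
noncomputable def marg {n d : ℕ} (μ : (Fin n → Fin d) → ℝ) (i : ℕ) (hi : i ≤ n)
    (x : Fin i → Fin d) : ℝ :=
  ∑ y ∈ Finset.univ.filter
      (fun y : Fin n → Fin d => ∀ j : Fin i, y (Fin.castLE hi j) = x j), μ y

lemma snoc_restrict {n d : ℕ} (x : Fin n → Fin d) (i : Fin n) :
    (Fin.snoc (fun j : Fin i.val => x (Fin.castLE i.isLt.le j)) (x i)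
      : Fin (i.val+1) → Fin d) =
    fun j : Fin (i.val+1) => x (Fin.castLE i.isLt j) := by
  funext j
  refine Fin.lastCases ?_ ?_ j
  · rw [Fin.snoc_last]
    congr 1
  · intro k
    rw [Fin.snoc_castSucc]
    congr 1

lemma marg_snoc_sum {n d : ℕ} (μ : (Fin n → Fin d) → ℝ) {i : ℕ} (h : i + 1 ≤ n)
    (p : Fin i → Fin d) :
    ∑ y : Fin d, marg μ (i+1) h (Fin.snoc p y) = marg μ i (Nat.le_of_succ_le h) p := by
  classical
  unfold marg
  have key : ∀ y : Fin d,
      (Finset.univ.filter fun z : Fin n → Fin d =>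
        ∀ j : Fin (i+1), z (Fin.castLE h j) = (Fin.snoc p y : Fin (i+1) → Fin d) j) =
      (Finset.univ.filter fun z : Fin n → Fin d =>
        ∀ j : Fin i, z (Fin.castLE (Nat.le_of_succ_le h) j) = p j).filter
        (fun z => z ⟨i, h⟩ = y) := by
    intro y
    ext z
    simp only [Finset.mem_filter, Finset.mem_univ, true_and]
    constructor
    · intro hz
      constructor
      · intro j
        have := hz (Fin.castSucc j)
        rwa [Fin.snoc_castSucc, show Fin.castLE h (Fin.castSucc j)
          = Fin.castLE (Nat.le_of_succ_le h) j from Fin.ext (by simp)] at this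
      · have := hz (Fin.last i)
        rwa [Fin.snoc_last, show Fin.castLE h (Fin.last i) = ⟨i, h⟩ from Fin.ext (by simp)] at this
    · rintro ⟨h1, h2⟩ j
      refine Fin.lastCases ?_ ?_ j
      · rw [Fin.snoc_last, show Fin.castLE h (Fin.last i) = ⟨i, h⟩ from Fin.ext (by simp)]
        exact h2
      · intro k
        rw [Fin.snoc_castSucc, show Fin.castLE h (Fin.castSucc k)
          = Fin.castLE (Nat.le_of_succ_le h) k from Fin.ext (by simp)]
        exact h1 k
  calc ∑ y : Fin d, ∑ z ∈ Finset.univ.filter (fun z : Fin n → Fin d =>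
        ∀ j : Fin (i+1), z (Fin.castLE h j) = (Fin.snoc p y : Fin (i+1) → Fin d) j), μ z
      = ∑ y ∈ Finset.univ, ∑ z ∈ (Finset.univ.filter fun z : Fin n → Fin d =>
        ∀ j : Fin i, z (Fin.castLE (Nat.le_of_succ_le h) j) = p j).filter
          (fun z => z ⟨i, h⟩ = y), μ z := by
        exact Finset.sum_congr rfl fun y _ => by rw [key y]
    _ = _ := by
        rw [Finset.sum_fiberwise_eq_sum_filter]
        simp

lemma marg_zero {n d : ℕ} (μ : (Fin n → Fin d) → ℝ) (p : Fin 0 → Fin d) :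
    marg μ 0 (Nat.zero_le n) p = ∑ y, μ y := by
  unfold marg
  congr 1
  simp [Finset.filter_true_of_mem]

lemma marg_full {n d : ℕ} (μ : (Fin n → Fin d) → ℝ) (x : Fin n → Fin d) :
    marg μ n le_rfl (fun j => x (Fin.castLE le_rfl j)) = μ x := by
  unfold marg
  have : (Finset.univ.filter fun z : Fin n → Fin d =>
      ∀ j : Fin n, z (Fin.castLE le_rfl j) = x (Fin.castLE le_rfl j)) = {x} := by
    ext z
    simp only [Finset.mem_filter, Finset.mem_univ, true_and, Finset.mem_singleton]
    constructor
    · intro hz; funext j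
      have := hz j
      simpa [show Fin.castLE le_rfl j = j from Fin.ext rfl] using this
    · rintro rfl j; rfl
  rw [this, Finset.sum_singleton]

lemma prod_telescope {f : ℕ → ℝ} (hf0 : f 0 = 1) (hne : ∀ k, f k ≠ 0) (n : ℕ) :
    ∏ i ∈ Finset.range n, f (i+1) / f i = f n := by
  induction n with
  | zero => simp [hf0]
  | succ k ih =>
    rw [Finset.prod_range_succ, ih, mul_comm, div_mul_cancel₀ _ (hne k)]

lemma chain_sum {d : ℕ} (n : ℕ) (g : (i : ℕ) → (Fin (i+1) → Fin d) → ℝ)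
    (hg : ∀ i, i < n → ∀ p : Fin i → Fin d, ∑ y : Fin d, g i (Fin.snoc p y) = 1) :
    ∑ x : Fin n → Fin d, ∏ i : Fin n,
      g i.val (fun j : Fin (i.val+1) => x (Fin.castLE i.isLt j)) = 1 := by
  induction n with
  | zero => simp
  | succ m ih =>
    rw [← Equiv.sum_comp (Fin.snocEquiv (fun _ : Fin (m+1) => Fin d))
      (fun x => ∏ i : Fin (m+1), g i.val (fun j : Fin (i.val+1) => x (Fin.castLE i.isLt j)))]
    rw [Fintype.sum_prod_type]
    have step : ∀ (y : Fin d) (p : Fin m → Fin d),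
        (∏ i : Fin (m+1), g i.val (fun j : Fin (i.val+1) =>
          (Fin.snoc p y : Fin (m+1) → Fin d) (Fin.castLE i.isLt j)))
        = (∏ i : Fin m, g i.val (fun j : Fin (i.val+1) => p (Fin.castLE i.isLt j)))
            * g m (Fin.snoc p y) := by
      intro y p
      rw [Fin.prod_univ_castSucc]
      congr 1
      · apply Finset.prod_congr rfl
        intro i _
        congr 1
        funext j
        have h1 : Fin.castLE (Fin.castSucc i).isLt j = Fin.castSucc (Fin.castLE i.isLt j) :=
          Fin.ext rfl
        rw [h1, Fin.snoc_castSucc]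
    calc ∑ y : Fin d, ∑ p : Fin m → Fin d,
          (∏ i : Fin (m+1), g i.val (fun j : Fin (i.val+1) =>
            (Fin.snocEquiv (fun _ : Fin (m+1) => Fin d) (y, p)) (Fin.castLE i.isLt j)))
        = ∑ p : Fin m → Fin d, (∏ i : Fin m, g i.val
            (fun j : Fin (i.val+1) => p (Fin.castLE i.isLt j)))
              * ∑ y : Fin d, g m (Fin.snoc p y) := by
          rw [Finset.sum_comm]
          refine Finset.sum_congr rfl fun p _ => ?_
          rw [Finset.mul_sum]
          refine Finset.sum_congr rfl fun y _ => ?_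
          simpa [Fin.snocEquiv] using step y p
      _ = 1 := by
          have : ∀ p : Fin m → Fin d, ∑ y : Fin d, g m (Fin.snoc p y) = 1 :=
            fun p => hg m (Nat.lt_succ_self m) p
          simp only [this, mul_one]
          exact ih (fun i hi p => hg i (Nat.lt_succ_of_lt hi) p)

lemma mu_telescope {n d : ℕ} (μ : (Fin n → Fin d) → ℝ) (hμ1 : ∑ y, μ y = 1)
    (hpos : ∀ (i : ℕ), 1 ≤ i → ∀ (hi : i ≤ n), ∀ x : Fin i → Fin d, 0 < marg μ i hi x)
    (x : Fin n → Fin d) :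
    ∏ i : Fin n, (marg μ (i.val+1) i.isLt (fun j : Fin (i.val+1) => x (Fin.castLE i.isLt j)) /
      marg μ i.val (Nat.le_of_succ_le i.isLt)
        (fun j : Fin i.val => x (Fin.castLE (Nat.le_of_succ_le i.isLt) j))) = μ x := by
  classical
  set f : ℕ → ℝ := fun k => if h : k ≤ n then marg μ k h (fun j => x (Fin.castLE h j)) else 1
    with hfdef
  have hf : ∀ k (h : k ≤ n), f k = marg μ k h (fun j => x (Fin.castLE h j)) := by
    intro k h; simp only [hfdef, dif_pos h]
  have hf0 : f 0 = 1 := by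
    rw [hf 0 (Nat.zero_le n), marg_zero, hμ1]
  have hne : ∀ k, f k ≠ 0 := by
    intro k
    by_cases h : k ≤ n
    · rcases Nat.eq_zero_or_pos k with rfl | hk
      · rw [hf0]; norm_num
      · rw [hf k h]; exact ne_of_gt (hpos k hk h _)
    · simp only [hfdef, dif_neg h]; norm_num
  have hfn : f n = μ x := by rw [hf n le_rfl, marg_full]
  calc ∏ i : Fin n, (marg μ (i.val+1) i.isLt (fun j : Fin (i.val+1) => x (Fin.castLE i.isLt j)) /
      marg μ i.val (Nat.le_of_succ_le i.isLt)
        (fun j : Fin i.val => x (Fin.castLE (Nat.le_of_succ_le i.isLt) j)))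
      = ∏ i : Fin n, (fun k => f (k+1) / f k) i.val := by
        refine Finset.prod_congr rfl fun i _ => ?_
        show _ = f (i.val+1) / f i.val
        rw [hf (i.val+1) i.isLt, hf i.val (Nat.le_of_succ_le i.isLt)]
    _ = ∏ i ∈ Finset.range n, f (i+1) / f i :=
        Fin.prod_univ_eq_prod_range (fun k => f (k+1) / f k) n
    _ = f n := prod_telescope hf0 hne n
    _ = μ x := hfn

noncomputable def gfun {d : ℕ} (μhat : (i : ℕ) → (Fin i → Fin d) → ℝ) :
    (i : ℕ) → (Fin (i+1) → Fin d) → ℝ :=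
  fun i q => μhat (i+1) q /
    ∑ y : Fin d, μhat (i+1) (Fin.snoc (fun j : Fin i => q (Fin.castSucc j)) y)

/-- Chain-rule sampler accuracy (mathematical core of Lemma 4): if
`μ̂` approximates every marginal of `μ` to relative error `ε/(3n)`, then the chain-rule
distribution `ν(x) = ∏_{i=1}^n μ̂(x_{≺i}x_i)/∑_y μ̂(x_{≺i}y)` is a probability
distribution on `[d]^n` with `‖μ - ν‖_TV ≤ ε`. -/
theorem stmt14 (n d : ℕ) (hd : 2 ≤ d)
    (μ : (Fin n → Fin d) → ℝ) (hμ0 : ∀ y, 0 ≤ μ y) (hμ1 : ∑ y, μ y = 1)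
    (hpos : ∀ (i : ℕ) (h1 : 1 ≤ i) (hi : i ≤ n) (x : Fin i → Fin d), 0 < marg μ i hi x)
    (ε : ℝ) (hε0 : 0 < ε) (hε1 : ε ≤ 1)
    (μhat : (i : ℕ) → (Fin i → Fin d) → ℝ)
    (hμhatpos : ∀ (i : ℕ), 1 ≤ i → i ≤ n → ∀ x : Fin i → Fin d, 0 < μhat i x)
    (happrox : ∀ (i : ℕ) (h1 : 1 ≤ i) (hi : i ≤ n) (x : Fin i → Fin d),
      |marg μ i hi x - μhat i x| ≤ ε / (3 * n) * marg μ i hi x)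
    (ν : (Fin n → Fin d) → ℝ)
    (hν : ν = fun x => ∏ i : Fin n,
      μhat (i.val + 1) (Fin.snoc (fun j : Fin i.val => x (Fin.castLE i.isLt.le j)) (x i)) /
        ∑ y : Fin d,
          μhat (i.val + 1) (Fin.snoc (fun j : Fin i.val => x (Fin.castLE i.isLt.le j)) y)) :
    (∀ x, 0 ≤ ν x) ∧ (∑ x, ν x = 1) ∧ (1 / 2) * ∑ x, |μ x - ν x| ≤ ε := by
  classical
  haveI : NeZero d := ⟨by omega⟩
  -- positivity of the normalizing sums
  have hZpos : ∀ (i : ℕ) (h : i + 1 ≤ n) (p : Fin i → Fin d),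
      0 < ∑ y : Fin d, μhat (i+1) (Fin.snoc p y) := by
    intro i h p
    exact Finset.sum_pos (fun y _ => hμhatpos (i+1) (Nat.le_add_left 1 i) h _)
      Finset.univ_nonempty
  -- ν is positive
  have hν0 : ∀ x, 0 < ν x := by
    intro x
    rw [hν]
    refine Finset.prod_pos fun i _ => ?_
    exact div_pos (hμhatpos (i.val+1) (Nat.le_add_left 1 i.val) i.isLt _)
      (hZpos i.val i.isLt _)
  -- rewrite ν in terms of gfun
  have hνg : ν = fun x => ∏ i : Fin n,
      gfun μhat i.val (fun j : Fin (i.val+1) => x (Fin.castLE i.isLt j)) := by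
    rw [hν]
    funext x
    refine Finset.prod_congr rfl fun i _ => ?_
    unfold gfun
    rw [snoc_restrict x i]
    congr 1
  -- ν sums to 1
  have hνsum : ∑ x, ν x = 1 := by
    rw [hνg]
    refine chain_sum n (gfun μhat) ?_
    intro i hi p
    unfold gfun
    have hp : ∀ y : Fin d,
        (fun j : Fin i => (Fin.snoc p y : Fin (i+1) → Fin d) (Fin.castSucc j)) = p :=
      fun y => funext fun j => Fin.snoc_castSucc _ _ _
    have : ∀ y : Fin d,
        μhat (i+1) (Fin.snoc p y) /
          (∑ z : Fin d, μhat (i+1)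
            (Fin.snoc (fun j : Fin i => (Fin.snoc p y : Fin (i+1) → Fin d) (Fin.castSucc j)) z))
        = μhat (i+1) (Fin.snoc p y) / (∑ z : Fin d, μhat (i+1) (Fin.snoc p z)) := by
      intro y; rw [hp y]
    rw [Finset.sum_congr rfl (fun y _ => this y), ← Finset.sum_div,
      div_self (ne_of_gt (hZpos i hi p))]
  refine ⟨fun x => le_of_lt (hν0 x), hνsum, ?_⟩
  -- the total variation bound
  rcases Nat.eq_zero_or_pos n with rfl | hn
  · -- n = 0
    have hu : (Finset.univ : Finset (Fin 0 → Fin d)) = {fun a => Fin.elim0 a} := by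
      ext z
      simp [eq_iff_true_of_subsingleton]
    rw [hu, Finset.sum_singleton] at hμ1 hνsum ⊢
    rw [hμ1, hνsum]
    simpa using le_of_lt hε0
  · -- n ≥ 1
    set δ : ℝ := ε / (3 * n) with hδdef
    have hnR : (1:ℝ) ≤ (n:ℝ) := by exact_mod_cast hn
    have hδpos : 0 < δ := div_pos hε0 (by positivity)
    have hδ3 : δ ≤ 1/3 := by
      rw [hδdef, div_le_div_iff₀ (by positivity) (by norm_num)]
      nlinarith
    have hδ1 : δ < 1 := by linarith
    have hlow : ∀ (i : ℕ) (h1 : 1 ≤ i) (hi : i ≤ n) (x : Fin i → Fin d),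
        (1 - δ) * marg μ i hi x ≤ μhat i x := by
      intro i h1 hi x
      have h := abs_le.mp (happrox i h1 hi x)
      nlinarith [h.1, h.2]
    have hup : ∀ (i : ℕ) (h1 : 1 ≤ i) (hi : i ≤ n) (x : Fin i → Fin d),
        μhat i x ≤ (1 + δ) * marg μ i hi x := by
      intro i h1 hi x
      have h := abs_le.mp (happrox i h1 hi x)
      nlinarith [h.1, h.2]
    set r : ℝ := ((1 - δ) / (1 + δ)) ^ n with hrdef
    have hbase0 : (0:ℝ) < (1 - δ) / (1 + δ) := div_pos (by linarith) (by linarith)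
    have hbase1 : (1 - δ) / (1 + δ) ≤ 1 := by
      rw [div_le_one (by linarith)]; linarith
    have hr0 : 0 < r := pow_pos hbase0 n
    have hr1 : r ≤ 1 := pow_le_one₀ (le_of_lt hbase0) hbase1
    -- pointwise lower bound  r * μ x ≤ ν x
    have key : ∀ x, r * μ x ≤ ν x := by
      intro x
      rw [hν]
      have hstep : ∀ i : Fin n,
          ((1 - δ) / (1 + δ)) *
            (marg μ (i.val+1) i.isLt (fun j : Fin (i.val+1) => x (Fin.castLE i.isLt j)) /
              marg μ i.val (Nat.le_of_succ_le i.isLt)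
                (fun j : Fin i.val => x (Fin.castLE (Nat.le_of_succ_le i.isLt) j)))
          ≤ μhat (i.val + 1)
              (Fin.snoc (fun j : Fin i.val => x (Fin.castLE i.isLt.le j)) (x i)) /
            ∑ y : Fin d,
              μhat (i.val + 1) (Fin.snoc (fun j : Fin i.val => x (Fin.castLE i.isLt.le j)) y) := by
        intro i
        have hA : 0 < marg μ (i.val+1) i.isLt
            (fun j : Fin (i.val+1) => x (Fin.castLE i.isLt j)) :=
          hpos _ (Nat.le_add_left 1 i.val) i.isLt _
        have hB : 0 < marg μ i.val (Nat.le_of_succ_le i.isLt)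
            (fun j : Fin i.val => x (Fin.castLE (Nat.le_of_succ_le i.isLt) j)) := by
          rw [← marg_snoc_sum μ i.isLt
            (fun j : Fin i.val => x (Fin.castLE (Nat.le_of_succ_le i.isLt) j))]
          exact Finset.sum_pos
            (fun y _ => hpos (i.val+1) (Nat.le_add_left 1 i.val) i.isLt _)
            Finset.univ_nonempty
        have hZle : (∑ y : Fin d,
            μhat (i.val + 1) (Fin.snoc (fun j : Fin i.val => x (Fin.castLE i.isLt.le j)) y))
            ≤ (1 + δ) * marg μ i.val (Nat.le_of_succ_le i.isLt)
                (fun j : Fin i.val => x (Fin.castLE (Nat.le_of_succ_le i.isLt) j)) := by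
          have := marg_snoc_sum μ (i.isLt)
            (fun j : Fin i.val => x (Fin.castLE (Nat.le_of_succ_le i.isLt) j))
          calc (∑ y : Fin d,
              μhat (i.val + 1) (Fin.snoc (fun j : Fin i.val => x (Fin.castLE i.isLt.le j)) y))
              ≤ ∑ y : Fin d, (1 + δ) * marg μ (i.val+1) i.isLt
                  (Fin.snoc (fun j : Fin i.val => x (Fin.castLE i.isLt.le j)) y) :=
                Finset.sum_le_sum (fun y _ =>
                  hup (i.val+1) (Nat.le_add_left 1 i.val) i.isLt _)
            _ = (1 + δ) * ∑ y : Fin d, marg μ (i.val+1) i.isLt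
                  (Fin.snoc (fun j : Fin i.val => x (Fin.castLE (Nat.le_of_succ_le i.isLt) j)) y) := by
                rw [Finset.mul_sum]
            _ = _ := by rw [this]
        have hnum : (1 - δ) * marg μ (i.val+1) i.isLt
            (fun j : Fin (i.val+1) => x (Fin.castLE i.isLt j))
            ≤ μhat (i.val + 1)
              (Fin.snoc (fun j : Fin i.val => x (Fin.castLE i.isLt.le j)) (x i)) := by
          rw [snoc_restrict x i]
          exact hlow (i.val+1) (Nat.le_add_left 1 i.val) i.isLt _
        rw [div_mul_div_comm]
        exact div_le_div₀ (le_of_lt (hμhatpos (i.val+1) (Nat.le_add_left 1 i.val) i.isLt _))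
          hnum (hZpos i.val i.isLt _) hZle
      calc r * μ x
          = ∏ i : Fin n, (((1 - δ) / (1 + δ)) *
            (marg μ (i.val+1) i.isLt (fun j : Fin (i.val+1) => x (Fin.castLE i.isLt j)) /
              marg μ i.val (Nat.le_of_succ_le i.isLt)
                (fun j : Fin i.val => x (Fin.castLE (Nat.le_of_succ_le i.isLt) j)))) := by
            rw [Finset.prod_mul_distrib, Finset.prod_const, Finset.card_univ, Fintype.card_fin,
              mu_telescope μ hμ1 hpos x, ← hrdef]
        _ ≤ _ := by
            refine Finset.prod_le_prod (fun i _ => ?_) (fun i _ => hstep i)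
            have hA : 0 < marg μ (i.val+1) i.isLt
                (fun j : Fin (i.val+1) => x (Fin.castLE i.isLt j)) :=
              hpos _ (Nat.le_add_left 1 i.val) i.isLt _
            have hB : 0 < marg μ i.val (Nat.le_of_succ_le i.isLt)
                (fun j : Fin i.val => x (Fin.castLE (Nat.le_of_succ_le i.isLt) j)) := by
              rw [← marg_snoc_sum μ i.isLt
                (fun j : Fin i.val => x (Fin.castLE (Nat.le_of_succ_le i.isLt) j))]
              exact Finset.sum_pos
                (fun y _ => hpos (i.val+1) (Nat.le_add_left 1 i.val) i.isLt _)
                Finset.univ_nonempty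
            positivity
    -- 1 - r ≤ ε
    have hrε : 1 - r ≤ ε := by
      have hnδ : (n:ℝ) * δ = ε / 3 := by
        rw [hδdef]; field_simp
      have hber : 1 + (n:ℝ) * (-(2*δ)) ≤ (1 + (-(2*δ)))^n :=
        one_add_mul_le_pow (by nlinarith) n
      have hb : 1 - 2*δ ≤ (1 - δ) / (1 + δ) := by
        rw [le_div_iff₀ (by linarith)]; nlinarith
      have h2δ : (0:ℝ) ≤ 1 - 2*δ := by linarith
      have hpow : (1 - 2*δ)^n ≤ ((1 - δ) / (1 + δ))^n := pow_le_pow_left₀ h2δ hb n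
      have : 1 - 2*(ε/3) ≤ r := by
        rw [hrdef]
        calc 1 - 2*(ε/3) = 1 + (n:ℝ) * (-(2*δ)) := by rw [← hnδ]; ring
          _ ≤ (1 + (-(2*δ)))^n := hber
          _ = (1 - 2*δ)^n := by ring_nf
          _ ≤ ((1 - δ) / (1 + δ))^n := hpow
      linarith
    -- conclusion
    have habs : ∀ x, |μ x - ν x| = 2 * max (μ x - ν x) 0 - (μ x - ν x) := by
      intro x
      rcases le_total (μ x - ν x) 0 with h | h
      · rw [abs_of_nonpos h, max_eq_right h]; ring
      · rw [abs_of_nonneg h, max_eq_left h]; ring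
    have hmax : ∀ x, max (μ x - ν x) 0 ≤ (1 - r) * μ x := by
      intro x
      refine max_le (by nlinarith [key x]) (by nlinarith [hμ0 x])
    calc (1/2 : ℝ) * ∑ x, |μ x - ν x|
        = (1/2 : ℝ) * ∑ x, (2 * max (μ x - ν x) 0 - (μ x - ν x)) := by
          rw [Finset.sum_congr rfl (fun x _ => habs x)]
      _ = ∑ x, max (μ x - ν x) 0 := by
          rw [Finset.sum_sub_distrib, Finset.sum_sub_distrib, hμ1, hνsum, ← Finset.mul_sum]
          ring
      _ ≤ ∑ x, (1 - r) * μ x := Finset.sum_le_sum (fun x _ => hmax x)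
      _ = 1 - r := by rw [← Finset.mul_sum, hμ1, mul_one]
      _ ≤ ε := hrε
end
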